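/- Assume the setup, the stability assumption, and the γ-feasibility assumption with γ ∈ [γ_min, γ_max]. Let r_0 > 0 and let l(r_0) be a Lipschitz constant of the Hessian of a on the ball {Θ : ‖Θ − Θ*‖ ≤ r_0}, i.e. ‖∇²a(Θ) − ∇²a(Θ')‖ ≤ l(r_0)‖Θ − Θ'‖ in the operator norm induced by the spectral norm, for all Θ, Θ' in this ball. Set c_0 = 2 l(r_0) ω max{να/(2β(2−ν)), 1}² and c_1 = max{1, να/(2β(2−ν))}^{-1} r_0/2. Then for all Δ_S ∈ Ω and Δ_L ∈ Sym(d) with ‖(Δ_S, Δ_L)‖_γ ≤ c_1, the Taylor remainder R(Δ_S + Δ_L) = ∇a(Θ* + Δ_S + Δ_L) − ∇a(Θ*) − H*(Δ_S + Δ_L) satisfies ‖D R(Δ_S + Δ_L)‖_γ ≤ (c_0/ξ(T)) ‖(Δ_S, Δ_L)‖_γ². -/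

import Mathlib

noncomputable section

open scoped BigOperators
open Matrix

namespace IsingSL

/-- The space of real `d × d` matrices.  Symmetry (membership in `Sym(d)`) is imposed
through explicit hypotheses `Matrix.IsSymm`. -/
abbrev Mat (d : ℕ) := Matrix (Fin d) (Fin d) ℝ

/-- The trace inner product `⟨A, B⟩ = tr(Aᵀ B)`. -/
def minner {d : ℕ} (A B : Mat d) : ℝ := (Aᵀ * B).trace

/-- Entrywise `ℓ∞`-norm of a matrix. -/
def normInf {d : ℕ} (M : Mat d) : ℝ := ⨆ p : Fin d × Fin d, |M p.1 p.2|

/-- Entrywise `ℓ1`-norm of a matrix. -/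
def norm1 {d : ℕ} (M : Mat d) : ℝ := ∑ i, ∑ j, |M i j|

/-- Euclidean norm of a vector. -/
def vnorm {d : ℕ} (v : Fin d → ℝ) : ℝ := Real.sqrt (∑ i, v i ^ 2)

/-- Spectral norm (`ℓ2`-operator norm) of a matrix. -/
def specNorm {d : ℕ} (M : Mat d) : ℝ :=
  sSup {t | ∃ v : Fin d → ℝ, vnorm v ≤ 1 ∧ t = vnorm (M.mulVec v)}

/-- Nuclear norm of a matrix (sum of singular values), characterized via
trace duality with the spectral norm. -/
def nucNorm {d : ℕ} (M : Mat d) : ℝ :=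
  sSup {t | ∃ B : Mat d, specNorm B ≤ 1 ∧ t = minner M B}

/-- The `γ`-norm of a pair of matrices: `‖(S, L)‖_γ = max {‖S‖_∞/γ, ‖L‖}`. -/
def ganorm {d : ℕ} (γ : ℝ) (S L : Mat d) : ℝ := max (normInf S / γ) (specNorm L)

/-- The `{0,1}`-vector corresponding to `x : Fin d → Bool`. -/
def b2r {d : ℕ} (x : Fin d → Bool) : Fin d → ℝ := fun i => if x i then 1 else 0

/-- The sufficient statistics `Φ(x) = x xᵀ` for `x ∈ {0,1}^d`. -/
def phi {d : ℕ} (x : Fin d → Bool) : Mat d := Matrix.of fun i j => b2r x i * b2r x j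

/-- The log-partition function `a(Θ)` of the pairwise Ising model. -/
def logA {d : ℕ} (Θ : Mat d) : ℝ :=
  Real.log (∑ x : Fin d → Bool, Real.exp (minner Θ (phi x)))

/-- The Ising probability mass function `p(x) = exp(⟨Θ, Φ(x)⟩ - a(Θ))`. -/
def isingPMF {d : ℕ} (Θ : Mat d) (x : Fin d → Bool) : ℝ :=
  Real.exp (minner Θ (phi x) - logA Θ)

/-- `Φ* = E_Θ[Φ]`, the expected sufficient statistics; this is the gradient `∇a(Θ)`
of the log-partition function w.r.t. the trace inner product. -/
def meanPhi {d : ℕ} (Θ : Mat d) : Mat d := ∑ x : Fin d → Bool, isingPMF Θ x • phi x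

/-- The Hessian `∇²a(Θ)` of the log-partition function as a linear operator on matrices;
it is the covariance operator `M ↦ E[⟨Φ,M⟩Φ] - ⟨E[Φ],M⟩E[Φ]` of the sufficient statistics. -/
def hessA {d : ℕ} (Θ : Mat d) (M : Mat d) : Mat d :=
  (∑ x : Fin d → Bool, (isingPMF Θ x * minner (phi x) M) • phi x)
    - minner (meanPhi Θ) M • meanPhi Θ

/-- The empirical second-moment matrix `Φ^n` of a sample. -/
def empPhi {d n : ℕ} (xs : Fin n → (Fin d → Bool)) : Mat d :=
  (n : ℝ)⁻¹ • ∑ k, phi (xs k)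

/-- The negative log-likelihood `ℓ(Θ) = a(Θ) - ⟨Θ, Φ^n⟩`. -/
def nll {d : ℕ} (Phin Θ : Mat d) : ℝ := logA Θ - minner Θ Phin

/-- The probability of the event `E` under `n` i.i.d. samples from the Ising
distribution with parameter `Θ`. -/
def samplesProb {d : ℕ} (Θ : Mat d) (n : ℕ) (E : Set (Fin n → (Fin d → Bool))) : ℝ :=
  ∑ xs : Fin n → (Fin d → Bool), E.indicator (fun ys => ∏ k, isingPMF Θ (ys k)) xs

/-- Probability vectors on `{0,1}^d`. -/
def IsProbVec {d : ℕ} (p : (Fin d → Bool) → ℝ) : Prop :=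
  (∀ x, 0 ≤ p x) ∧ ∑ x : Fin d → Bool, p x = 1

/-- The (Shannon) entropy `H(p) = -Σ_x p(x) log p(x)` (with `0 log 0 = 0`). -/
def entropy {d : ℕ} (p : (Fin d → Bool) → ℝ) : ℝ :=
  -∑ x : Fin d → Bool, p x * Real.log (p x)

/-- The expectation `E_p[Φ]` of the sufficient statistics under `p`. -/
def Ephi {d : ℕ} (p : (Fin d → Bool) → ℝ) : Mat d :=
  ∑ x : Fin d → Bool, p x • phi x

/-- The linear identification of `d × d` matrices with the euclidean space on `d·d`
coordinates; under this identification the euclidean inner product corresponds to the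
trace inner product on matrices. -/
def matEuclid (d : ℕ) : Mat d ≃ₗ[ℝ] EuclideanSpace ℝ (Fin d × Fin d) where
  toFun M := WithLp.toLp 2 (fun p : Fin d × Fin d => M p.1 p.2)
  invFun v := Matrix.of fun i j => v (i, j)
  map_add' _ _ := rfl
  map_smul' _ _ := rfl
  left_inv _ := rfl
  right_inv _ := rfl

/-- Orthogonal projection onto a subspace `V` of `Mat d`, w.r.t. the trace inner product. -/
def proj {d : ℕ} (V : Submodule ℝ (Mat d)) (M : Mat d) : Mat d :=
  (matEuclid d).symm
    ((Submodule.orthogonalProjectionOnto (V.map ((matEuclid d) : Mat d →ₗ[ℝ] EuclideanSpace ℝ (Fin d × Fin d)))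
      ((matEuclid d) M) : EuclideanSpace ℝ (Fin d × Fin d)))

/-- Projection onto the orthogonal complement of `V`. -/
def projPerp {d : ℕ} (V : Submodule ℝ (Mat d)) (M : Mat d) : Mat d := M - proj V M

/-- The twisting `ρ(T, T') = max_{‖M‖=1} ‖(P_T - P_{T'}) M‖` between two subspaces. -/
def rho {d : ℕ} (T T' : Submodule ℝ (Mat d)) : ℝ :=
  sSup {t | ∃ M : Mat d, specNorm M = 1 ∧ t = specNorm (proj T M - proj T' M)}

/-- `ξ(T)`: the smallest `ξ` with `‖M‖_∞ ≤ ξ ‖M‖` for all `M ∈ T`. -/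
def xi {d : ℕ} (T : Submodule ℝ (Mat d)) : ℝ :=
  sInf {c | ∀ M ∈ T, normInf M ≤ c * specNorm M}

/-- `μ(Ω)`: the smallest `μ` with `‖N‖ ≤ μ ‖N‖_∞` for all `N ∈ Ω`. -/
def mu {d : ℕ} (Om : Submodule ℝ (Mat d)) : ℝ :=
  sInf {c | ∀ N ∈ Om, specNorm N ≤ c * normInf N}

/-- `Ω(S) = {M ∈ Sym(d) : supp(M) ⊆ supp(S)}`, the tangent space at `S` to the variety
of symmetric matrices with at most `|supp S|` nonzero entries. -/
def OmegaS {d : ℕ} (S : Mat d) : Submodule ℝ (Mat d) where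
  carrier := {M | M.IsSymm ∧ ∀ i j, S i j = 0 → M i j = 0}
  add_mem' := by
    rintro a b ⟨ha, ha0⟩ ⟨hb, hb0⟩
    refine ⟨?_, fun i j h => ?_⟩
    · show (a + b)ᵀ = a + b
      rw [Matrix.transpose_add, ha, hb]
    · show a i j + b i j = 0
      rw [ha0 i j h, hb0 i j h, add_zero]
  zero_mem' := by
    refine ⟨?_, fun i j _ => rfl⟩
    show (0 : Mat _)ᵀ = 0
    rw [Matrix.transpose_zero]
  smul_mem' := by
    rintro c a ⟨ha, ha0⟩
    refine ⟨?_, fun i j h => ?_⟩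
    · show (c • a)ᵀ = c • a
      rw [Matrix.transpose_smul, ha]
    · show c * a i j = 0
      rw [ha0 i j h, mul_zero]

/-- `T(L) = {U Xᵀ + X Uᵀ : X ∈ ℝ^{d×r}}`, the tangent space at `L = U D Uᵀ` to the
variety of symmetric matrices of rank at most `r`. -/
def TSpace {d r : ℕ} (U : Matrix (Fin d) (Fin r) ℝ) : Submodule ℝ (Mat d) where
  carrier := {M | ∃ X : Matrix (Fin d) (Fin r) ℝ, M = U * Xᵀ + X * Uᵀ}
  add_mem' := by
    rintro a b ⟨X, rfl⟩ ⟨Y, rfl⟩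
    exact ⟨X + Y, by rw [Matrix.transpose_add, Matrix.mul_add, Matrix.add_mul]; abel⟩
  zero_mem' := ⟨0, by simp⟩
  smul_mem' := by
    rintro c a ⟨X, rfl⟩
    exact ⟨c • X, by rw [Matrix.transpose_smul, Matrix.mul_smul, Matrix.smul_mul, smul_add]⟩

/-- `T'` is the tangent space `T(L')` at some rank-`r` symmetric matrix
`L' = U D Uᵀ` (restricted eigenvalue decomposition: `U` with orthonormal columns,
`D` invertible diagonal). -/
def IsTangentSpace (d r : ℕ) (T' : Submodule ℝ (Mat d)) : Prop :=
  ∃ (U : Matrix (Fin d) (Fin r) ℝ) (D : Matrix (Fin r) (Fin r) ℝ),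
    Uᵀ * U = 1 ∧ D.IsDiag ∧ IsUnit D.det ∧ T' = TSpace U

/-- A solution of the tangent-space constrained problem
`min_{(S,L) ∈ Om × T'} ℓ(S+L) + λ(γ‖S‖₁ + ‖L‖_*)`. -/
def IsYSol {d : ℕ} (Om T' : Submodule ℝ (Mat d)) (Phin : Mat d) (lam γ : ℝ)
    (p : Mat d × Mat d) : Prop :=
  p.1 ∈ Om ∧ p.2 ∈ T' ∧
    ∀ q : Mat d × Mat d, q.1 ∈ Om → q.2 ∈ T' →
      nll Phin (p.1 + p.2) + lam * (γ * norm1 p.1 + nucNorm p.2) ≤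
        nll Phin (q.1 + q.2) + lam * (γ * norm1 q.1 + nucNorm q.2)

/-- A solution of the convex program
`min_{S, L ∈ Sym(d), L ⪰ 0} ℓ(S+L) + λ(γ‖S‖₁ + tr L)`. -/
def IsSLSol {d : ℕ} (Phin : Mat d) (lam γ : ℝ) (p : Mat d × Mat d) : Prop :=
  p.1.IsSymm ∧ p.2.PosSemidef ∧
    ∀ q : Mat d × Mat d, q.1.IsSymm → q.2.PosSemidef →
      nll Phin (p.1 + p.2) + lam * (γ * norm1 p.1 + p.2.trace) ≤
        nll Phin (q.1 + q.2) + lam * (γ * norm1 q.1 + q.2.trace)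

/-- The setup: a nonzero symmetric matrix `S*` and a positive-semidefinite `L*` with
restricted eigenvalue decomposition `L* = U D Uᵀ` (so `L*` has rank `r`). -/
structure Setup (d r : ℕ) where
  Sstar : Mat d
  U : Matrix (Fin d) (Fin r) ℝ
  Dg : Matrix (Fin r) (Fin r) ℝ
  hU : Uᵀ * U = 1
  hDdiag : Dg.IsDiag
  hDunit : IsUnit Dg.det
  hSsymm : Sstar.IsSymm
  hSne : Sstar ≠ 0
  hLpsd : (U * Dg * Uᵀ).PosSemidef

namespace Setup

variable {d r : ℕ} (C : Setup d r)

/-- `L* = U D Uᵀ`. -/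
def Lstar : Mat d := C.U * C.Dg * C.Uᵀ

/-- `Θ* = S* + L*`. -/
def Thstar : Mat d := C.Sstar + C.Lstar

/-- `Ω = Ω(S*)`. -/
def Om : Submodule ℝ (Mat d) := OmegaS C.Sstar

/-- `T = T(L*)`. -/
def Tt : Submodule ℝ (Mat d) := TSpace C.U

/-- `H* = ∇²a(Θ*)`, the Hessian of the log-partition function at `Θ*`. -/
def Hop : Mat d → Mat d := hessA C.Thstar

/-- `‖H*‖`, the operator norm of `H*` w.r.t. the spectral norm. -/
def HopNorm : ℝ := sSup {t | ∃ M : Mat d, specNorm M = 1 ∧ t = specNorm (C.Hop M)}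

/-- `ξ(T)`. -/
def xiT : ℝ := xi C.Tt

/-- `μ(Ω)`. -/
def muOm : ℝ := mu C.Om

/-- `α_Ω = min {‖P_Ω H*(M)‖_∞ : M ∈ Ω, ‖M‖_∞ = 1}`. -/
def alphaOm : ℝ :=
  sInf {t | ∃ M, M ∈ C.Om ∧ normInf M = 1 ∧ t = normInf (proj C.Om (C.Hop M))}

/-- `α_{T,ε}`. -/
def alphaT (ε : ℝ) : ℝ :=
  sInf {t | ∃ T' : Submodule ℝ (Mat d), IsTangentSpace d r T' ∧ rho C.Tt T' ≤ ε ∧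
    ∃ M, M ∈ T' ∧ specNorm M = 1 ∧ t = specNorm (proj T' (C.Hop M))}

/-- `δ_Ω = max {‖P_{Ω^⊥} H*(M)‖_∞ : M ∈ Ω, ‖M‖_∞ = 1}`. -/
def deltaOm : ℝ :=
  sSup {t | ∃ M, M ∈ C.Om ∧ normInf M = 1 ∧ t = normInf (projPerp C.Om (C.Hop M))}

/-- `δ_{T,ε}`. -/
def deltaT (ε : ℝ) : ℝ :=
  sSup {t | ∃ T' : Submodule ℝ (Mat d), IsTangentSpace d r T' ∧ rho C.Tt T' ≤ ε ∧
    ∃ M, M ∈ T' ∧ specNorm M = 1 ∧ t = specNorm (projPerp T' (C.Hop M))}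

/-- `β_Ω = max {‖H*(M)‖ : M ∈ Ω, ‖M‖ = 1}`. -/
def betaOm : ℝ :=
  sSup {t | ∃ M, M ∈ C.Om ∧ specNorm M = 1 ∧ t = specNorm (C.Hop M)}

/-- `β_T`. -/
def betaT : ℝ :=
  sSup {t | ∃ T' : Submodule ℝ (Mat d), IsTangentSpace d r T' ∧ rho C.Tt T' ≤ C.xiT / 2 ∧
    ∃ M, M ∈ T' ∧ normInf M = 1 ∧ t = normInf (C.Hop M)}

/-- `β = max {β_Ω, β_T}`. -/
def betaC : ℝ := max C.betaOm C.betaT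

/-- `α = min {α_Ω, α_{T,ξ(T)/2}}`. -/
def alphaC : ℝ := min C.alphaOm (C.alphaT (C.xiT / 2))

/-- `δ = max {δ_Ω, δ_{T,ξ(T)/2}}`. -/
def deltaC : ℝ := max C.deltaOm (C.deltaT (C.xiT / 2))

/-- The stability assumption: `α > 0` and `δ/α ≤ 1 - 2ν` for some `ν ∈ (0, 1/2]`. -/
def Stability (ν : ℝ) : Prop :=
  0 < C.alphaC ∧ 0 < ν ∧ ν ≤ 1 / 2 ∧ C.deltaC / C.alphaC ≤ 1 - 2 * ν

/-- `γ_min = 3β(2-ν)ξ(T)/(να)`. -/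
def gammaMin (ν : ℝ) : ℝ := 3 * C.betaC * (2 - ν) * C.xiT / (ν * C.alphaC)

/-- `γ_max = να/(2β(2-ν)μ(Ω))`. -/
def gammaMax (ν : ℝ) : ℝ := ν * C.alphaC / (2 * C.betaC * (2 - ν) * C.muOm)

/-- The `γ`-feasibility assumption: the range `[γ_min, γ_max]` is non-empty. -/
def GammaFeasible (ν : ℝ) : Prop := C.gammaMin ν ≤ C.gammaMax ν

/-- `ω = max {να/(3β(2-ν)), 1}`. -/
def omg (ν : ℝ) : ℝ := max (ν * C.alphaC / (3 * C.betaC * (2 - ν))) 1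

/-- `c₂ = 40/α + 1/‖H*‖`. -/
def c2 : ℝ := 40 / C.alphaC + 1 / C.HopNorm

/-- `c₃ = (6(2-ν)/ν + 1) c₂² ‖H*‖ ω`. -/
def c3 (ν : ℝ) : ℝ := (6 * (2 - ν) / ν + 1) * C.c2 ^ 2 * C.HopNorm * C.omg ν

/-- `c₄ = c₂ + 3αc₂²(2-ν)/(16(3-ν))`. -/
def c4 (ν : ℝ) : ℝ := C.c2 + 3 * C.alphaC * C.c2 ^ 2 * (2 - ν) / (16 * (3 - ν))

/-- `c₅ = max {c₃, c₄}`. -/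
def c5 (ν : ℝ) : ℝ := max (C.c3 ν) (C.c4 ν)

/-- `c₆ = ναc₂/(2β(2-ν))`. -/
def c6 (ν : ℝ) : ℝ := ν * C.alphaC * C.c2 / (2 * C.betaC * (2 - ν))

/-- `c₀ = 2 l(r₀) ω max{να/(2β(2-ν)), 1}²`. -/
def c0 (ν l0 : ℝ) : ℝ :=
  2 * l0 * C.omg ν * (max (ν * C.alphaC / (2 * C.betaC * (2 - ν))) 1) ^ 2

/-- `c₁ = max{1, να/(2β(2-ν))}⁻¹ r₀/2`. -/
def c1 (ν r0 : ℝ) : ℝ :=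
  (max 1 (ν * C.alphaC / (2 * C.betaC * (2 - ν))))⁻¹ * r0 / 2

/-- `s_min`, the smallest absolute value of a nonzero entry of `S*`. -/
def smin : ℝ := sInf {t | ∃ i j, C.Sstar i j ≠ 0 ∧ t = |C.Sstar i j|}

/-- `σ_min`, the smallest nonzero eigenvalue of `L*`. -/
def sigmin : ℝ := sInf {t | t ≠ 0 ∧ ∃ i, t = C.hLpsd.1.eigenvalues i}

/-- The gap assumption: `s_min ≥ c₆λ_n/μ(Ω)` and `σ_min ≥ c₅λ_n/ξ(T)²`. -/
def GapAssumption (ν lam : ℝ) : Prop :=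
  C.c6 ν * lam / C.muOm ≤ C.smin ∧ C.c5 ν * lam / C.xiT ^ 2 ≤ C.sigmin

/-- `l0` is a Lipschitz constant (in operator norm w.r.t. the spectral norm) of the
Hessian `∇²a` on the ball `{Θ : ‖Θ - Θ*‖ ≤ r0}`. -/
def HessLip (r0 l0 : ℝ) : Prop :=
  ∀ Θ Θ' : Mat d, specNorm (Θ - C.Thstar) ≤ r0 → specNorm (Θ' - C.Thstar) ≤ r0 →
    ∀ M : Mat d, specNorm (hessA Θ M - hessA Θ' M) ≤ l0 * specNorm (Θ - Θ') * specNorm M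

/-- The correct model set `M`. -/
def Mset (γ ν lam : ℝ) : Set (Mat d × Mat d) :=
  {p | p.1 ∈ C.Om ∧ p.2.IsSymm ∧ p.2.rank ≤ C.Lstar.rank ∧
    ganorm γ (C.Hop ((p.1 - C.Sstar) + (p.2 - C.Lstar)))
      (C.Hop ((p.1 - C.Sstar) + (p.2 - C.Lstar))) ≤ 9 * lam ∧
    specNorm (projPerp C.Tt (p.2 - C.Lstar)) ≤ C.xiT * lam / (C.omg ν * C.HopNorm)}

end Setup

/-!
Along the segment `t ↦ Θ* + tΔ` the mean parameter `∇a = meanPhi` has derivative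
`∇²a(Θ* + tΔ) Δ`, so the Lipschitz bound on the Hessian yields `‖R(Δ)‖ ≤ l(r₀)/2 ‖Δ‖²`
whenever `‖Δ‖ ≤ r₀` (spectral norms, which are Mathlib's `L2` operator norms).
The `γ`-norm is traded for spectral norms in both directions:
`‖Δ_S‖ ≤ μ(Ω) ‖Δ_S‖_∞ ≤ μ(Ω) γ ‖(Δ_S, Δ_L)‖_γ` with `μ(Ω) γ ≤ να/(2β(2-ν))` by `γ ≤ γ_max`,
which together with `c₁` puts `Δ = Δ_S + Δ_L` in the ball of radius `r₀`; and
`‖R‖_∞/γ ≤ ‖R‖/γ_min ≤ (ω/ξ(T)) ‖R‖`, while `ξ(T) ≤ 1 ≤ ω` handles the spectral component.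
Positivity of `β`, needed for `γ > 0`, comes from `α_Ω > 0`: `H*` cannot vanish on `S*/‖S*‖_∞`.
-/

open scoped Matrix.Norms.L2Operator

section Taylor

variable {E : Type*} [NormedAddCommGroup E] [NormedSpace ℝ E]

theorem norm_image_sub_sub_deriv_le {f f' : ℝ → E} {L : ℝ} (hf : ∀ t, HasDerivAt f (f' t) t)
    (hf' : ∀ t ∈ Set.Ico (0 : ℝ) 1, ‖f' t - f' 0‖ ≤ L * t) :
    ‖f 1 - f 0 - f' 0‖ ≤ L / 2 := by
  have hg : ∀ t, HasDerivAt (fun s => f s - f 0 - s • f' 0) (f' t - f' 0) t := fun t => by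
    simpa using ((hf t).sub_const (f 0)).fun_sub ((hasDerivAt_id' t).smul_const (f' 0))
  have hB : ∀ t, HasDerivAt (fun s : ℝ => L / 2 * s ^ 2) (L * t) t := fun t => by
    refine ((hasDerivAt_pow 2 t).const_mul (L / 2)).congr_deriv ?_
    ring
  have := image_norm_le_of_norm_deriv_right_le_deriv_boundary (a := 0) (b := 1)
    (fun t _ => (hg t).continuousAt.continuousWithinAt) (fun t _ => (hg t).hasDerivWithinAt)
    (by simp) hB hf' (Set.right_mem_Icc.2 zero_le_one)
  simpa using this

end Taylor

section Norms

variable {d : ℕ}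

theorem vnorm_eq_norm (v : Fin d → ℝ) : vnorm v = ‖WithLp.toLp 2 v‖ := by
  simp [vnorm, EuclideanSpace.norm_eq, sq_abs]

theorem specNorm_eq_norm (M : Mat d) : specNorm M = ‖M‖ := by
  rw [Matrix.cstar_norm_def, ← ContinuousLinearMap.sSup_unitClosedBall_eq_norm]
  refine congrArg sSup (Set.ext fun t => ?_)
  simp only [Set.mem_ofPred_eq, Set.mem_image, Metric.mem_closedBall, dist_zero_right,
    vnorm_eq_norm]
  constructor
  · rintro ⟨v, hv, rfl⟩
    exact ⟨WithLp.toLp 2 v, hv, rfl⟩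
  · rintro ⟨x, hx, rfl⟩
    exact ⟨x.ofLp, hx, rfl⟩

theorem abs_le_normInf (M : Mat d) (i j : Fin d) : |M i j| ≤ normInf M :=
  le_ciSup (f := fun p : Fin d × Fin d => |M p.1 p.2|) (Set.finite_range _).bddAbove (i, j)

theorem normInf_zero : normInf (0 : Mat d) = 0 := by
  simp [normInf]

theorem normInf_nonneg (M : Mat d) : 0 ≤ normInf M :=
  Real.iSup_nonneg fun _ => abs_nonneg _

theorem normInf_pos {M : Mat d} (hM : M ≠ 0) : 0 < normInf M := by
  obtain ⟨i, j, hij⟩ : ∃ i j, M i j ≠ 0 := by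
    by_contra! h
    exact hM (Matrix.ext h)
  exact (abs_pos.2 hij).trans_le (abs_le_normInf M i j)

theorem normInf_smul (c : ℝ) (M : Mat d) : normInf (c • M) = |c| * normInf M := by
  simp only [normInf, Real.mul_iSup_of_nonneg (abs_nonneg c), Matrix.smul_apply, smul_eq_mul,
    abs_mul]

theorem abs_apply_le_norm (M : Mat d) (i j : Fin d) : |M i j| ≤ ‖M‖ := by
  let e := EuclideanSpace.single j (1 : ℝ)
  calc |M i j| = ‖(Matrix.toEuclideanCLM (𝕜 := ℝ) M e).ofLp i‖ := by
        simp [e, Matrix.mulVec_single]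
    _ ≤ ‖Matrix.toEuclideanCLM (𝕜 := ℝ) M e‖ := PiLp.norm_apply_le _ i
    _ ≤ ‖Matrix.toEuclideanCLM (𝕜 := ℝ) M‖ * ‖e‖ := ContinuousLinearMap.le_opNorm _ _
    _ = ‖M‖ := by simp [e, Matrix.l2_opNorm_toEuclideanCLM]

theorem normInf_le_norm (M : Mat d) : normInf M ≤ ‖M‖ :=
  Real.iSup_le (fun p => abs_apply_le_norm M p.1 p.2) (norm_nonneg M)

theorem norm_le_mul_normInf (M : Mat d) :
    ‖M‖ ≤ (∑ i, ∑ j, ‖(Matrix.single i j 1 : Mat d)‖) * normInf M := by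
  calc ‖M‖ = ‖∑ i, ∑ j, M i j • (Matrix.single i j 1 : Mat d)‖ := by
        simp only [Matrix.smul_single, smul_eq_mul, mul_one, ← Matrix.matrix_eq_sum_single]
    _ ≤ ∑ i, ∑ j, ‖M i j • (Matrix.single i j 1 : Mat d)‖ :=
        (norm_sum_le _ _).trans (Finset.sum_le_sum fun i _ => norm_sum_le _ _)
    _ ≤ ∑ i, ∑ j, normInf M * ‖(Matrix.single i j 1 : Mat d)‖ := by
        gcongr with i _ j _
        rw [norm_smul, Real.norm_eq_abs]
        gcongr
        exact abs_le_normInf M i j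
    _ = _ := by simp only [← Finset.mul_sum, mul_comm]

end Norms

section Constants

variable {d : ℕ} {V : Submodule ℝ (Mat d)}

theorem norm_le_mu_mul_normInf {N : Mat d} (hN : N ∈ V) : ‖N‖ ≤ mu V * normInf N := by
  rcases eq_or_ne N 0 with rfl | hN0
  · simp [normInf_zero]
  have hpos := normInf_pos hN0
  rw [← div_le_iff₀ hpos]
  refine le_csInf ⟨_, fun M _ => (specNorm_eq_norm M).trans_le (norm_le_mul_normInf M)⟩
    fun c hc => ?_
  rw [div_le_iff₀ hpos, ← specNorm_eq_norm]
  exact hc N hN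

theorem mu_pos (hV : V ≠ ⊥) : 0 < mu V := by
  obtain ⟨N, hN, hN0⟩ := Submodule.exists_mem_ne_zero_of_ne_bot hV
  have h := (norm_pos_iff.2 hN0).trans_le (norm_le_mu_mul_normInf hN)
  exact pos_of_mul_pos_left h (normInf_nonneg N)

theorem div_le_of_mem_xi_set {c : ℝ} (hc : c ∈ {c | ∀ M ∈ V, normInf M ≤ c * specNorm M})
    {M : Mat d} (hM : M ∈ V) (hM0 : M ≠ 0) : normInf M / ‖M‖ ≤ c := by
  rw [div_le_iff₀ (norm_pos_iff.2 hM0), ← specNorm_eq_norm]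
  exact hc M hM

theorem one_mem_xi_set : (1 : ℝ) ∈ {c | ∀ M ∈ V, normInf M ≤ c * specNorm M} :=
  fun M _ => by rw [one_mul, specNorm_eq_norm]; exact normInf_le_norm M

theorem xi_pos (hV : V ≠ ⊥) : 0 < xi V := by
  obtain ⟨M, hM, hM0⟩ := Submodule.exists_mem_ne_zero_of_ne_bot hV
  exact (div_pos (normInf_pos hM0) (norm_pos_iff.2 hM0)).trans_le
    (le_csInf ⟨1, one_mem_xi_set⟩ fun c hc => div_le_of_mem_xi_set hc hM hM0)

theorem xi_le_one (hV : V ≠ ⊥) : xi V ≤ 1 := by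
  obtain ⟨M, hM, hM0⟩ := Submodule.exists_mem_ne_zero_of_ne_bot hV
  exact csInf_le ⟨0, fun c hc =>
    (div_pos (normInf_pos hM0) (norm_pos_iff.2 hM0)).le.trans (div_le_of_mem_xi_set hc hM hM0)⟩
    one_mem_xi_set

theorem TSpace_ne_bot {r : ℕ} (hr : 0 < r) {U : Matrix (Fin d) (Fin r) ℝ} (hU : Uᵀ * U = 1) :
    TSpace U ≠ ⊥ := by
  intro h
  have hmem : U * Uᵀ + U * Uᵀ ∈ TSpace U := ⟨U, rfl⟩
  rw [h, Submodule.mem_bot] at hmem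
  have key : Uᵀ * (U * Uᵀ + U * Uᵀ) * U = 2 • (1 : Matrix (Fin r) (Fin r) ℝ) := by
    simp only [Matrix.mul_add, Matrix.add_mul, ← Matrix.mul_assoc, hU, Matrix.one_mul, two_nsmul]
  rw [hmem, Matrix.mul_zero, Matrix.zero_mul] at key
  simpa using congrFun (congrFun key ⟨0, hr⟩) ⟨0, hr⟩

end Constants

section Ising

variable {d : ℕ}

theorem minner_comm (A B : Mat d) : minner A B = minner B A := by
  rw [minner, ← Matrix.trace_transpose, Matrix.transpose_mul, Matrix.transpose_transpose, minner]

theorem minner_add_smul_left (A B N : Mat d) (s : ℝ) :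
    minner (A + s • B) N = minner A N + s * minner B N := by
  simp [minner, Matrix.transpose_add, Matrix.add_mul, Matrix.trace_add]

theorem minner_add_right (A M N : Mat d) : minner A (M + N) = minner A M + minner A N := by
  simp [minner, Matrix.mul_add, Matrix.trace_add]

theorem minner_smul_right (A M : Mat d) (c : ℝ) : minner A (c • M) = c * minner A M := by
  simp [minner]

theorem minner_meanPhi (Θ M : Mat d) :
    minner (meanPhi Θ) M = ∑ x, isingPMF Θ x * minner (phi x) M := by
  simp [minner, meanPhi, Matrix.transpose_sum, Finset.sum_mul, Matrix.trace_sum]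

theorem partitionFn_pos (Θ : Mat d) : 0 < ∑ x : Fin d → Bool, Real.exp (minner Θ (phi x)) :=
  Finset.sum_pos (fun _ _ => Real.exp_pos _) Finset.univ_nonempty

theorem isingPMF_eq (Θ : Mat d) (x : Fin d → Bool) :
    isingPMF Θ x = Real.exp (minner Θ (phi x)) / ∑ y, Real.exp (minner Θ (phi y)) := by
  rw [isingPMF, logA, Real.exp_sub, Real.exp_log (partitionFn_pos Θ)]

def hessALin (Θ : Mat d) : Mat d →ₗ[ℝ] Mat d where
  toFun := hessA Θ
  map_add' M N := by
    simp only [hessA, minner_add_right, mul_add, add_smul, Finset.sum_add_distrib]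
    abel
  map_smul' c M := by
    simp only [hessA, minner_smul_right, RingHom.id_apply, smul_sub, Finset.smul_sum, smul_smul]
    congr 1
    exact Finset.sum_congr rfl fun x _ => by ring_nf

theorem hasDerivAt_minner_line (Θ Δ N : Mat d) (t : ℝ) :
    HasDerivAt (fun s => minner (Θ + s • Δ) N) (minner Δ N) t := by
  simp only [minner_add_smul_left]
  simpa using ((hasDerivAt_id t).mul_const (minner Δ N)).const_add (minner Θ N)

theorem hasDerivAt_logA_line (Θ Δ : Mat d) (t : ℝ) :
    HasDerivAt (fun s => logA (Θ + s • Δ)) (minner (meanPhi (Θ + t • Δ)) Δ) t := by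
  have hZ := HasDerivAt.fun_sum (u := Finset.univ) fun x _ =>
    (hasDerivAt_minner_line Θ Δ (phi x) t).exp
  refine (hZ.log (partitionFn_pos _).ne').congr_deriv ?_
  rw [minner_meanPhi, Finset.sum_div]
  refine Finset.sum_congr rfl fun x _ => ?_
  rw [isingPMF_eq, minner_comm (phi x) Δ]
  ring

theorem hasDerivAt_isingPMF_line (Θ Δ : Mat d) (x : Fin d → Bool) (t : ℝ) :
    HasDerivAt (fun s => isingPMF (Θ + s • Δ) x)
      (isingPMF (Θ + t • Δ) x * (minner (phi x) Δ - minner (meanPhi (Θ + t • Δ)) Δ)) t := by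
  rw [← minner_comm Δ]
  exact ((hasDerivAt_minner_line Θ Δ (phi x) t).sub (hasDerivAt_logA_line Θ Δ t)).exp

theorem hasDerivAt_meanPhi_line (Θ Δ : Mat d) (t : ℝ) :
    HasDerivAt (fun s => meanPhi (Θ + s • Δ)) (hessA (Θ + t • Δ) Δ) t := by
  refine (HasDerivAt.fun_sum (u := Finset.univ) fun x _ =>
    (hasDerivAt_isingPMF_line Θ Δ x t).smul_const (phi x)).congr_deriv ?_
  simp only [hessA, meanPhi, mul_sub, sub_smul, Finset.sum_sub_distrib, Finset.smul_sum,
    smul_smul]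
  congr 1
  exact Finset.sum_congr rfl fun x _ => by ring_nf

end Ising

theorem norm_meanPhi_sub_sub_hessA_le {d : ℕ} {Θ Δ : Mat d} {l : ℝ}
    (hlip : ∀ Θ', ‖Θ' - Θ‖ ≤ ‖Δ‖ → ∀ M, ‖hessA Θ' M - hessA Θ M‖ ≤ l * ‖Θ' - Θ‖ * ‖M‖) :
    ‖meanPhi (Θ + Δ) - meanPhi Θ - hessA Θ Δ‖ ≤ l / 2 * ‖Δ‖ ^ 2 := by
  have h := norm_image_sub_sub_deriv_le (L := l * ‖Δ‖ ^ 2) (hasDerivAt_meanPhi_line Θ Δ)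
    fun t ht => by
      have hΘt : ‖Θ + t • Δ - Θ‖ = t * ‖Δ‖ := by
        rw [add_sub_cancel_left, norm_smul, Real.norm_of_nonneg ht.1]
      rw [zero_smul, add_zero]
      calc ‖hessA (Θ + t • Δ) Δ - hessA Θ Δ‖ ≤ l * ‖Θ + t • Δ - Θ‖ * ‖Δ‖ :=
            hlip _ (hΘt.trans_le (mul_le_of_le_one_left (norm_nonneg Δ) ht.2.le)) Δ
        _ = l * ‖Δ‖ ^ 2 * t := by rw [hΘt]; ring
  simpa [mul_div_right_comm] using h

theorem proj_zero {d : ℕ} (V : Submodule ℝ (Mat d)) : proj V 0 = 0 := by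
  simp [proj]

namespace Setup

variable {d r : ℕ} (C : Setup d r) {ν γ : ℝ}

theorem Sstar_mem_Om : C.Sstar ∈ C.Om := ⟨C.hSsymm, fun _ _ h => h⟩

theorem Om_ne_bot : C.Om ≠ ⊥ := fun h => C.hSne (by simpa [h] using C.Sstar_mem_Om)

theorem exists_hop_ne_zero (hα : 0 < C.alphaOm) : ∃ M ∈ C.Om, C.Hop M ≠ 0 := by
  have hS := normInf_pos C.hSne
  have hM : (normInf C.Sstar)⁻¹ • C.Sstar ∈ C.Om := C.Om.smul_mem _ C.Sstar_mem_Om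
  refine ⟨_, hM, fun h0 => ?_⟩
  have hle : C.alphaOm ≤ normInf (proj C.Om (C.Hop ((normInf C.Sstar)⁻¹ • C.Sstar))) :=
    csInf_le ⟨0, by rintro _ ⟨M, -, -, rfl⟩; exact normInf_nonneg _⟩
      ⟨_, hM, by rw [normInf_smul, abs_inv, abs_of_pos hS, inv_mul_cancel₀ hS.ne'], rfl⟩
  rw [h0, proj_zero, normInf_zero] at hle
  exact hα.not_ge hle

theorem betaOm_pos (h : ∃ M ∈ C.Om, C.Hop M ≠ 0) : 0 < C.betaOm := by
  obtain ⟨M, hM, hHM⟩ := h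
  have hM0 : M ≠ 0 := by
    rintro rfl
    exact hHM (map_zero (hessALin C.Thstar))
  let H := LinearMap.toContinuousLinearMap (hessALin C.Thstar)
  have hle : specNorm (C.Hop (‖M‖⁻¹ • M)) ≤ C.betaOm := by
    refine le_csSup ⟨‖H‖, ?_⟩ ⟨_, C.Om.smul_mem _ hM, ?_, rfl⟩
    · rintro _ ⟨N, -, hN, rfl⟩
      rw [specNorm_eq_norm] at hN ⊢
      calc ‖C.Hop N‖ = ‖H N‖ := rfl
        _ ≤ ‖H‖ * ‖N‖ := H.le_opNorm N
        _ = ‖H‖ := by rw [hN, mul_one]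
    · rw [specNorm_eq_norm, norm_smul, norm_inv, norm_norm,
        inv_mul_cancel₀ (norm_ne_zero_iff.2 hM0)]
  refine lt_of_lt_of_le ?_ hle
  rw [specNorm_eq_norm, norm_pos_iff]
  change hessALin C.Thstar (‖M‖⁻¹ • M) ≠ 0
  rw [map_smul]
  exact smul_ne_zero (inv_ne_zero (norm_ne_zero_iff.2 hM0)) hHM

theorem betaC_pos (hα : 0 < C.alphaC) : 0 < C.betaC :=
  (C.betaOm_pos (C.exists_hop_ne_zero (hα.trans_le (min_le_left _ _)))).trans_le
    (le_max_left _ _)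

theorem xiT_pos (hr : 0 < r) : 0 < C.xiT := xi_pos (TSpace_ne_bot hr C.hU)

theorem xiT_le_one (hr : 0 < r) : C.xiT ≤ 1 := xi_le_one (TSpace_ne_bot hr C.hU)

theorem gammaMin_pos (hstab : C.Stability ν) (hr : 0 < r) : 0 < C.gammaMin ν := by
  obtain ⟨hα, hν, hν2, -⟩ := hstab
  have hβ := C.betaC_pos hα
  have hξ := C.xiT_pos hr
  have h2ν : 0 < 2 - ν := by linarith
  unfold gammaMin
  positivity

theorem ganorm_self_le (hstab : C.Stability ν) (hr : 0 < r) (hγ : C.gammaMin ν ≤ γ)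
    (R : Mat d) : ganorm γ R R ≤ C.omg ν / C.xiT * ‖R‖ := by
  have hγmin := C.gammaMin_pos hstab hr
  obtain ⟨hα, hν, hν2, -⟩ := hstab
  have hβ := C.betaC_pos hα
  have hξ := C.xiT_pos hr
  have h2ν : 0 < 2 - ν := by linarith
  rw [ganorm, specNorm_eq_norm]
  refine max_le ?_ ?_
  · calc normInf R / γ ≤ ‖R‖ / C.gammaMin ν :=
          div_le_div₀ (norm_nonneg R) (normInf_le_norm R) hγmin hγ
      _ = ν * C.alphaC / (3 * C.betaC * (2 - ν)) / C.xiT * ‖R‖ := by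
          unfold gammaMin
          field_simp
      _ ≤ C.omg ν / C.xiT * ‖R‖ := by
          gcongr
          exact le_max_left _ _
  · calc ‖R‖ = 1 * ‖R‖ := (one_mul _).symm
      _ ≤ C.omg ν / C.xiT * ‖R‖ := by
          gcongr
          rw [le_div_iff₀ hξ, one_mul]
          exact (C.xiT_le_one hr).trans (le_max_right _ _)

theorem norm_add_le_of_ganorm (hstab : C.Stability ν) (hγ0 : 0 < γ) (hγ : γ ≤ C.gammaMax ν)
    {DS : Mat d} (hDS : DS ∈ C.Om) (DL : Mat d) :
    ‖DS + DL‖ ≤ 2 * max (ν * C.alphaC / (2 * C.betaC * (2 - ν))) 1 * ganorm γ DS DL := by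
  obtain ⟨hα, hν, hν2, -⟩ := hstab
  have hβ := C.betaC_pos hα
  have hμ : 0 < C.muOm := mu_pos C.Om_ne_bot
  have h2ν : 0 < 2 - ν := by linarith
  set K := max (ν * C.alphaC / (2 * C.betaC * (2 - ν))) 1
  set g := ganorm γ DS DL
  have hDL : ‖DL‖ ≤ g := by
    rw [← specNorm_eq_norm]
    exact le_max_right _ _
  have hg : 0 ≤ g := (norm_nonneg DL).trans hDL
  have hDS' : normInf DS ≤ γ * g := by
    rw [← div_le_iff₀' hγ0]
    exact le_max_left _ _
  have hμγ : C.muOm * γ ≤ K :=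
    calc C.muOm * γ ≤ C.muOm * C.gammaMax ν := by gcongr
      _ = ν * C.alphaC / (2 * C.betaC * (2 - ν)) := by
          unfold gammaMax
          field_simp
      _ ≤ K := le_max_left _ _
  have hK : 1 ≤ K := le_max_right _ _
  calc ‖DS + DL‖ ≤ ‖DS‖ + ‖DL‖ := norm_add_le _ _
    _ ≤ C.muOm * (γ * g) + 1 * g := by
        rw [one_mul]
        gcongr
        exact (norm_le_mu_mul_normInf hDS).trans (mul_le_mul_of_nonneg_left hDS' hμ.le)
    _ ≤ K * g + K * g := by
        rw [← mul_assoc]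
        gcongr
    _ = 2 * K * g := by ring

variable {C} {r0 l0 : ℝ}

theorem HessLip.nonneg (hd : 0 < d) (hr0 : 0 < r0) (hlip : C.HessLip r0 l0) : 0 ≤ l0 := by
  have : NeZero d := ⟨hd.ne'⟩
  have h := hlip (C.Thstar + r0 • 1) C.Thstar
    (by rw [specNorm_eq_norm, add_sub_cancel_left, norm_smul, norm_one, mul_one,
      Real.norm_of_nonneg hr0.le])
    (by rw [specNorm_eq_norm, sub_self, norm_zero]; exact hr0.le) 1
  rw [specNorm_eq_norm, specNorm_eq_norm, specNorm_eq_norm, add_sub_cancel_left, norm_smul,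
    norm_one, mul_one, Real.norm_of_nonneg hr0.le, mul_one] at h
  exact nonneg_of_mul_nonneg_left ((norm_nonneg _).trans h) hr0

theorem HessLip.norm_remainder_le (hlip : C.HessLip r0 l0) {Δ : Mat d} (hΔ : ‖Δ‖ ≤ r0) :
    ‖meanPhi (C.Thstar + Δ) - meanPhi C.Thstar - C.Hop Δ‖ ≤ l0 / 2 * ‖Δ‖ ^ 2 :=
  norm_meanPhi_sub_sub_hessA_le fun Θ hΘ M => by
    simpa only [specNorm_eq_norm] using hlip Θ C.Thstar
      (by rw [specNorm_eq_norm]; exact hΘ.trans hΔ)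
      (by rw [specNorm_eq_norm, sub_self, norm_zero]; exact (norm_nonneg Δ).trans hΔ) M

end Setup

theorem taylor_remainder_bound_general (d r : ℕ) (hd : 1 ≤ d) (hr : 1 ≤ r)
    (C : Setup d r) (ν γ r0 l0 : ℝ) (hstab : C.Stability ν)
    (hγ : γ ∈ Set.Icc (C.gammaMin ν) (C.gammaMax ν))
    (hr0 : 0 < r0) (hlip : C.HessLip r0 l0) :
    ∀ DS DL : Mat d, DS ∈ C.Om → DL.IsSymm → ganorm γ DS DL ≤ C.c1 ν r0 →
      ganorm γ (meanPhi (C.Thstar + (DS + DL)) - meanPhi C.Thstar - C.Hop (DS + DL))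
          (meanPhi (C.Thstar + (DS + DL)) - meanPhi C.Thstar - C.Hop (DS + DL)) ≤
        C.c0 ν l0 / C.xiT * ganorm γ DS DL ^ 2 := by
  intro DS DL hDS _ hsmall
  set K := max (ν * C.alphaC / (2 * C.betaC * (2 - ν))) 1
  set g := ganorm γ DS DL
  have hK : 0 < K := one_pos.trans_le (le_max_right _ _)
  have hΔ : ‖DS + DL‖ ≤ 2 * K * g :=
    C.norm_add_le_of_ganorm hstab ((C.gammaMin_pos hstab hr).trans_le hγ.1) hγ.2 hDS DL
  have hΔr0 : ‖DS + DL‖ ≤ r0 := by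
    have hc1 : C.c1 ν r0 = K⁻¹ * r0 / 2 := by rw [Setup.c1, max_comm]
    refine hΔ.trans ((mul_le_mul_of_nonneg_left hsmall (by positivity)).trans_eq ?_)
    rw [hc1]
    field_simp
  have hω : 0 ≤ C.omg ν / C.xiT := div_nonneg (zero_le_one.trans (le_max_right _ _))
    (C.xiT_pos hr).le
  have hl0 := hlip.nonneg hd hr0
  calc _ ≤ C.omg ν / C.xiT * ‖meanPhi (C.Thstar + (DS + DL)) - meanPhi C.Thstar
          - C.Hop (DS + DL)‖ := C.ganorm_self_le hstab hr hγ.1 _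
    _ ≤ C.omg ν / C.xiT * (l0 / 2 * ‖DS + DL‖ ^ 2) := by
        gcongr
        exact hlip.norm_remainder_le hΔr0
    _ ≤ C.omg ν / C.xiT * (l0 / 2 * (2 * K * g) ^ 2) := by gcongr
    _ = C.c0 ν l0 / C.xiT * g ^ 2 := by
        rw [Setup.c0]
        ring

/-- Lemma 5, bound on the Taylor remainder of the gradient of the
log-partition function: under the stability and γ-feasibility assumptions, if `l(r₀)`
is a Lipschitz constant of `∇²a` on the ball of radius `r₀` around `Θ*`, then for all
`Δ_S ∈ Ω` and symmetric `Δ_L` with `‖(Δ_S, Δ_L)‖_γ ≤ c₁`, the remainder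
`R(Δ) = ∇a(Θ* + Δ) - ∇a(Θ*) - H*(Δ)` satisfies
`‖D R(Δ_S + Δ_L)‖_γ ≤ (c₀/ξ(T)) ‖(Δ_S, Δ_L)‖_γ²`. -/
theorem taylor_remainder_bound (d r : ℕ) (hd : 1 ≤ d) (hr : 1 ≤ r)
    (C : Setup d r) (ν γ r0 l0 : ℝ) (hstab : C.Stability ν) (hfeas : C.GammaFeasible ν)
    (hγ : γ ∈ Set.Icc (C.gammaMin ν) (C.gammaMax ν))
    (hr0 : 0 < r0) (hlip : C.HessLip r0 l0) :
    ∀ DS DL : Mat d, DS ∈ C.Om → DL.IsSymm → ganorm γ DS DL ≤ C.c1 ν r0 →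
      ganorm γ (meanPhi (C.Thstar + (DS + DL)) - meanPhi C.Thstar - C.Hop (DS + DL))
          (meanPhi (C.Thstar + (DS + DL)) - meanPhi C.Thstar - C.Hop (DS + DL)) ≤
        C.c0 ν l0 / C.xiT * ganorm γ DS DL ^ 2 :=
  taylor_remainder_bound_general d r hd hr C ν γ r0 l0 hstab hγ hr0 hlip

end IsingSL
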